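/- Let f: S → ℝ be layer-wise (L⁰, L¹)-smooth with f^inf = inf_{X∈S} f(X) > −∞. Let X⁰, X¹, …, X^K be iterates of deterministic Gluon with stepsizes t_i^k = ‖∇_i f(X^k)‖_{(i)⋆} / (L⁰_i + L¹_i ‖∇_i f(X^k)‖_{(i)⋆}). Then Σ_{k=0}^{K−1} Σ_{i=1}^p ‖∇_i f(X^k)‖_{(i)⋆}² / (2 (L⁰_i + L¹_i ‖∇_i f(X^k)‖_{(i)⋆})) ≤ f(X⁰) − f^inf. -/

import Mathlib

noncomputable section
open Finset

/-- Trace inner product `⟨A,B⟩ = tr(AᵀB)` on `m×n` real matrices (viewed as functions). -/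
def tip {m n : ℕ} (A B : Fin m → Fin n → ℝ) : ℝ := ∑ a, ∑ b, A a b * B a b

/-- An arbitrary norm on the space of `m×n` real matrices. -/
structure MatNorm (m n : ℕ) where
  N : (Fin m → Fin n → ℝ) → ℝ
  pos : ∀ A, A ≠ 0 → 0 < N A
  zero : N 0 = 0
  smul : ∀ (c : ℝ) (A : Fin m → Fin n → ℝ), N (c • A) = |c| * N A
  triangle : ∀ A B, N (A + B) ≤ N A + N B

/-- The dual norm `‖A‖⋆ = sup_{‖Z‖ ≤ 1} ⟨A, Z⟩`. -/
def MatNorm.dual {m n : ℕ} (nn : MatNorm m n) (A : Fin m → Fin n → ℝ) : ℝ :=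
  sSup {r : ℝ | ∃ Z, nn.N Z ≤ 1 ∧ r = tip A Z}

/-- `Y` minimizes the linear functional `Z ↦ ⟨G, Z⟩` over the ball of radius `t`
centered at `C` (the linear minimization oracle). -/
def IsLMOMin {m n : ℕ} (nn : MatNorm m n) (G C : Fin m → Fin n → ℝ) (t : ℝ)
    (Y : Fin m → Fin n → ℝ) : Prop :=
  nn.N (Y - C) ≤ t ∧ ∀ Z, nn.N (Z - C) ≤ t → tip G Y ≤ tip G Z

/-!
Write `ℓᵢ(X) = L⁰ᵢ + L¹ᵢ ‖∇ᵢf(X)‖⋆`. Along the segment from `X` to `Y` the directional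
derivative of `f` grows at most linearly, by layer-wise smoothness at `X`, which gives the
descent inequality `f(Y) ≤ f(X) + ⟨∇f(X), Y − X⟩ + Σᵢ ℓᵢ(X) ‖Yᵢ − Xᵢ‖² / 2`. The LMO step of
radius `tᵢ` makes `⟨∇ᵢf(X), Yᵢ − Xᵢ⟩ ≤ −tᵢ ‖∇ᵢf(X)‖⋆` and `‖Yᵢ − Xᵢ‖ ≤ tᵢ`, and the stepsize
`tᵢ = ‖∇ᵢf(X)‖⋆ / ℓᵢ(X)` minimizes the resulting quadratic bound, so every iteration decreases
`f` by at least `Σᵢ ‖∇ᵢf(Xᵏ)‖⋆² / (2 ℓᵢ(Xᵏ))`. Summing over `k < K` telescopes to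
`f(X⁰) − f(Xᴷ) ≤ f(X⁰) − f^inf`.
-/

lemma sub_le_of_hasDerivAt_le_affine {φ ψ : ℝ → ℝ} {c : ℝ}
    (hφ : ∀ t ∈ Set.Icc (0 : ℝ) 1, HasDerivAt φ (ψ t) t)
    (hψ : ∀ t ∈ Set.Icc (0 : ℝ) 1, ψ t ≤ ψ 0 + t * c) :
    φ 1 - φ 0 ≤ ψ 0 + c / 2 := by
  set h : ℝ → ℝ := fun t => φ t - t * ψ 0 - t ^ 2 / 2 * c
  have hderiv : ∀ t ∈ Set.Icc (0 : ℝ) 1, HasDerivAt h (ψ t - ψ 0 - t * c) t := fun t ht =>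
    (((hφ t ht).sub ((hasDerivAt_id t).mul_const (ψ 0))).sub
      (((hasDerivAt_pow 2 t).div_const 2).mul_const c)).congr_deriv (by simp)
  have hanti : AntitoneOn h (Set.Icc 0 1) :=
    antitoneOn_of_hasDerivWithinAt_nonpos (convex_Icc 0 1)
      (HasDerivAt.continuousOn hderiv)
      (fun t ht => (hderiv t (interior_subset ht)).hasDerivWithinAt)
      (fun t ht => by linarith [hψ t (interior_subset ht)])
  have h10 := hanti (Set.left_mem_Icc.2 zero_le_one) (Set.right_mem_Icc.2 zero_le_one) zero_le_one
  simp only [h] at h10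
  linarith

section TraceInner

variable {m n : ℕ}

lemma tip_add_right (A B C : Fin m → Fin n → ℝ) : tip A (B + C) = tip A B + tip A C := by
  simp [tip, mul_add, sum_add_distrib]

lemma tip_smul_right (A : Fin m → Fin n → ℝ) (c : ℝ) (B : Fin m → Fin n → ℝ) :
    tip A (c • B) = c * tip A B := by
  simp [tip, mul_sum, mul_left_comm]

lemma tip_sub_right (A B C : Fin m → Fin n → ℝ) : tip A (B - C) = tip A B - tip A C := by
  simp [tip, mul_sub, sum_sub_distrib]

lemma tip_sub_left (A B C : Fin m → Fin n → ℝ) : tip (A - B) C = tip A C - tip B C := by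
  simp [tip, sub_mul, sum_sub_distrib]

lemma tip_neg_neg (A B : Fin m → Fin n → ℝ) : tip (-A) (-B) = tip A B := by
  simp [tip]

lemma tip_zero_right (A : Fin m → Fin n → ℝ) : tip A 0 = 0 := by
  simp [tip]

end TraceInner

namespace MatNorm

variable {m n : ℕ} (nn : MatNorm m n)

lemma N_neg (A : Fin m → Fin n → ℝ) : nn.N (-A) = nn.N A := by
  simpa using nn.smul (-1) A

lemma N_nonneg (A : Fin m → Fin n → ℝ) : 0 ≤ nn.N A := by
  rcases eq_or_ne A 0 with rfl | hA
  · exact nn.zero.ge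
  · exact (nn.pos A hA).le

lemma eq_zero_of_N_nonpos {A : Fin m → Fin n → ℝ} (h : nn.N A ≤ 0) : A = 0 := by
  by_contra hA
  exact (nn.pos A hA).not_ge h

/-- Type synonym on which `nn` is the norm, so that linear functionals are bounded. -/
def Space (_nn : MatNorm m n) : Type := Fin m → Fin n → ℝ

instance : AddCommGroup nn.Space := inferInstanceAs (AddCommGroup (Fin m → Fin n → ℝ))

instance : Module ℝ nn.Space := inferInstanceAs (Module ℝ (Fin m → Fin n → ℝ))

instance : FiniteDimensional ℝ nn.Space :=
  inferInstanceAs (FiniteDimensional ℝ (Fin m → Fin n → ℝ))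

instance : NormedAddCommGroup nn.Space :=
  AddGroupNorm.toNormedAddCommGroup
    { toFun := nn.N
      map_zero' := nn.zero
      add_le' := nn.triangle
      neg' := nn.N_neg
      eq_zero_of_map_eq_zero' := fun _ h => nn.eq_zero_of_N_nonpos h.le }

instance : NormedSpace ℝ nn.Space := ⟨fun c A => (nn.smul c A).le⟩

def tipLinear (A : Fin m → Fin n → ℝ) : nn.Space →ₗ[ℝ] ℝ where
  toFun Z := tip A Z
  map_add' := tip_add_right A
  map_smul' := tip_smul_right A

lemma exists_tip_le_mul_N (A : Fin m → Fin n → ℝ) :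
    ∃ C, ∀ Z, tip A Z ≤ C * nn.N Z :=
  ⟨‖LinearMap.toContinuousLinearMap (nn.tipLinear A)‖, fun Z =>
    (le_abs_self _).trans ((nn.tipLinear A).toContinuousLinearMap.le_opNorm (Z : nn.Space))⟩

lemma dual_set_nonempty (A : Fin m → Fin n → ℝ) :
    {r : ℝ | ∃ Z, nn.N Z ≤ 1 ∧ r = tip A Z}.Nonempty :=
  ⟨0, 0, nn.zero.le.trans zero_le_one, (tip_zero_right A).symm⟩

lemma dual_set_bddAbove (A : Fin m → Fin n → ℝ) :
    BddAbove {r : ℝ | ∃ Z, nn.N Z ≤ 1 ∧ r = tip A Z} := by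
  obtain ⟨C, hC⟩ := nn.exists_tip_le_mul_N A
  refine ⟨max C 0, ?_⟩
  rintro _ ⟨Z, hZ, rfl⟩
  calc tip A Z ≤ C * nn.N Z := hC Z
    _ ≤ max C 0 * nn.N Z := by gcongr; exacts [nn.N_nonneg Z, le_max_left C 0]
    _ ≤ max C 0 := mul_le_of_le_one_right (le_max_right C 0) hZ

lemma dual_nonneg (A : Fin m → Fin n → ℝ) : 0 ≤ nn.dual A :=
  le_csSup (nn.dual_set_bddAbove A) ⟨0, nn.zero.le.trans zero_le_one, (tip_zero_right A).symm⟩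

lemma tip_le_dual_mul_N (A Z : Fin m → Fin n → ℝ) : tip A Z ≤ nn.dual A * nn.N Z := by
  rcases eq_or_ne Z 0 with rfl | hZ
  · simp [tip_zero_right, nn.zero]
  have hpos : 0 < nn.N Z := nn.pos Z hZ
  have hunit : nn.N ((nn.N Z)⁻¹ • Z) ≤ 1 := by
    rw [nn.smul, abs_of_pos (inv_pos.2 hpos), inv_mul_cancel₀ hpos.ne']
  have h := le_csSup (nn.dual_set_bddAbove A) ⟨_, hunit, rfl⟩
  rw [tip_smul_right, inv_mul_le_iff₀ hpos] at h
  rwa [mul_comm]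

end MatNorm

section LMO

variable {m n : ℕ} {nn : MatNorm m n} {G C Y : Fin m → Fin n → ℝ}

lemma IsLMOMin.tip_sub_le {t : ℝ} (h : IsLMOMin nn G C t Y) (ht : 0 ≤ t) :
    tip G (Y - C) ≤ -(t * nn.dual G) := by
  rw [le_neg, MatNorm.dual, ← smul_eq_mul, ← Real.sSup_smul_of_nonneg ht]
  refine csSup_le ((nn.dual_set_nonempty G).smul_set) ?_
  rintro _ ⟨_, ⟨D, hD, rfl⟩, rfl⟩
  have hfeas : nn.N ((C - t • D) - C) ≤ t := by
    rw [sub_sub_cancel_left, nn.N_neg, nn.smul, abs_of_nonneg ht]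
    exact mul_le_of_le_one_right ht hD
  have hmin := h.2 _ hfeas
  rw [tip_sub_right, tip_smul_right] at hmin
  show t * tip G D ≤ -tip G (Y - C)
  rw [tip_sub_right]
  linarith

lemma IsLMOMin.tip_add_sq_le {c : ℝ} (h : IsLMOMin nn G C (nn.dual G / c) Y) :
    tip G (Y - C) + c * nn.N (Y - C) ^ 2 / 2 ≤ -(nn.dual G ^ 2 / (2 * c)) := by
  have hs := nn.dual_nonneg G
  rcases le_or_gt c 0 with hc | hc
  · have hYC : Y - C = 0 :=
      nn.eq_zero_of_N_nonpos (h.1.trans (div_nonpos_of_nonneg_of_nonpos hs hc))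
    rw [hYC, tip_zero_right, nn.zero, le_neg]
    simpa using div_nonpos_of_nonneg_of_nonpos (sq_nonneg (nn.dual G)) (by linarith : 2 * c ≤ 0)
  · have ht : 0 ≤ nn.dual G / c := div_nonneg hs hc.le
    have hdesc := h.tip_sub_le ht
    have hsq : nn.N (Y - C) ^ 2 ≤ (nn.dual G / c) ^ 2 := pow_le_pow_left₀ (nn.N_nonneg _) h.1 2
    calc tip G (Y - C) + c * nn.N (Y - C) ^ 2 / 2
        ≤ -(nn.dual G / c * nn.dual G) + c * (nn.dual G / c) ^ 2 / 2 := by gcongr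
      _ = -(nn.dual G ^ 2 / (2 * c)) := by field_simp; ring

end LMO

lemma layerwise_descent {p : ℕ} {m n : Fin p → ℕ} (nn : ∀ i, MatNorm (m i) (n i))
    {f : (∀ i, Fin (m i) → Fin (n i) → ℝ) → ℝ}
    {g : (∀ i, Fin (m i) → Fin (n i) → ℝ) → ∀ i, Fin (m i) → Fin (n i) → ℝ}
    (hdiff : Differentiable ℝ f) (hgrad : ∀ X H, fderiv ℝ f X H = ∑ i, tip (g X i) (H i))
    (L0 L1 : Fin p → ℝ)
    (hsmooth : ∀ i X Y, (nn i).dual (g X i - g Y i)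
      ≤ (L0 i + L1 i * (nn i).dual (g X i)) * (nn i).N (X i - Y i))
    (X Y : ∀ i, Fin (m i) → Fin (n i) → ℝ) :
    f Y ≤ f X + ∑ i, tip (g X i) (Y i - X i)
      + (∑ i, (L0 i + L1 i * (nn i).dual (g X i)) * (nn i).N (Y i - X i) ^ 2) / 2 := by
  set v := Y - X
  set ψ : ℝ → ℝ := fun t => ∑ i, tip (g (X + t • v) i) (v i)
  have hφ : ∀ t : ℝ, HasDerivAt (fun t : ℝ => f (X + t • v)) (ψ t) t := by
    intro t
    simp only [ψ, ← hgrad]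
    exact (hdiff _).hasFDerivAt.comp_hasDerivAt t
      (by simpa using ((hasDerivAt_id t).smul_const v).const_add X)
  have hψ : ∀ t ∈ Set.Icc (0 : ℝ) 1, ψ t ≤ ψ 0
      + t * ∑ i, (L0 i + L1 i * (nn i).dual (g X i)) * (nn i).N (Y i - X i) ^ 2 := by
    intro t ht
    simp only [ψ, zero_smul, add_zero]
    rw [← sub_le_iff_le_add', ← sum_sub_distrib, mul_sum]
    refine sum_le_sum fun i _ => ?_
    have hdist : (nn i).N (X i - (X + t • v) i) = t * (nn i).N (v i) := by
      simp [(nn i).N_neg, (nn i).smul, abs_of_nonneg ht.1]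
    calc tip (g (X + t • v) i) (v i) - tip (g X i) (v i)
        = tip (g X i - g (X + t • v) i) (-v i) := by
          rw [← tip_sub_left, ← tip_neg_neg, neg_sub]
      _ ≤ (nn i).dual (g X i - g (X + t • v) i) * (nn i).N (v i) := by
        simpa only [(nn i).N_neg] using (nn i).tip_le_dual_mul_N _ (-v i)
      _ ≤ (L0 i + L1 i * (nn i).dual (g X i)) * (t * (nn i).N (v i)) * (nn i).N (v i) := by
        rw [← hdist]; exact mul_le_mul_of_nonneg_right (hsmooth i _ _) ((nn i).N_nonneg _)
      _ = t * ((L0 i + L1 i * (nn i).dual (g X i)) * (nn i).N (Y i - X i) ^ 2) := by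
        simp only [v, Pi.sub_apply]; ring
  have h01 := sub_le_of_hasDerivAt_le_affine (fun t _ => hφ t) hψ
  simp only [ψ, zero_smul, one_smul, add_zero, v, add_sub_cancel, Pi.sub_apply] at h01
  linarith

theorem stmt_11_general {p : ℕ} {m n : Fin p → ℕ}
    (nn : ∀ i, MatNorm (m i) (n i))
    (f : (∀ i, Fin (m i) → Fin (n i) → ℝ) → ℝ)
    (g : (∀ i, Fin (m i) → Fin (n i) → ℝ) → ∀ i, Fin (m i) → Fin (n i) → ℝ)
    (hdiff : ContDiff ℝ 1 f)
    (hgrad : ∀ X H, fderiv ℝ f X H = ∑ i, tip (g X i) (H i))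
    (L0 L1 : Fin p → ℝ)
    (hsmooth : ∀ i X Y, (nn i).dual (g X i - g Y i)
      ≤ (L0 i + L1 i * (nn i).dual (g X i)) * (nn i).N (X i - Y i))
    (finf : ℝ) (hfinf : IsGLB (Set.range f) finf)
    (X : ℕ → ∀ i, Fin (m i) → Fin (n i) → ℝ)
    (hupd : ∀ k i, IsLMOMin (nn i) (g (X k) i) (X k i)
      ((nn i).dual (g (X k) i) / (L0 i + L1 i * (nn i).dual (g (X k) i)))
      (X (k + 1) i))
    (K : ℕ) :
    ∑ k ∈ Finset.range K, ∑ i, ((nn i).dual (g (X k) i)) ^ 2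
        / (2 * (L0 i + L1 i * (nn i).dual (g (X k) i)))
      ≤ f (X 0) - finf := by
  have hstep : ∀ k, ∑ i, ((nn i).dual (g (X k) i)) ^ 2
      / (2 * (L0 i + L1 i * (nn i).dual (g (X k) i))) ≤ f (X k) - f (X (k + 1)) := by
    intro k
    have hdesc := layerwise_descent nn (hdiff.differentiable one_ne_zero) hgrad L0 L1 hsmooth
      (X k) (X (k + 1))
    have hlmo := sum_le_sum fun i (_ : i ∈ univ) => (hupd k i).tip_add_sq_le
    rw [sum_add_distrib, sum_neg_distrib, ← sum_div] at hlmo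
    linarith
  calc _ ≤ ∑ k ∈ range K, (f (X k) - f (X (k + 1))) := sum_le_sum fun k _ => hstep k
    _ = f (X 0) - f (X K) := sum_range_sub' _ _
    _ ≤ f (X 0) - finf := by linarith [hfinf.1 ⟨X K, rfl⟩]

/-- Telescoped descent of deterministic Gluon with adaptive stepsizes
`tᵢᵏ = ‖∇ᵢf(Xᵏ)‖⋆/(L⁰ᵢ + L¹ᵢ‖∇ᵢf(Xᵏ)‖⋆)`:
`Σ_{k<K} Σᵢ ‖∇ᵢf(Xᵏ)‖⋆²/(2(L⁰ᵢ + L¹ᵢ‖∇ᵢf(Xᵏ)‖⋆)) ≤ f(X⁰) − f^inf`. -/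
theorem stmt_11 {p : ℕ} {m n : Fin p → ℕ}
    (nn : ∀ i, MatNorm (m i) (n i))
    (f : (∀ i, Fin (m i) → Fin (n i) → ℝ) → ℝ)
    (g : (∀ i, Fin (m i) → Fin (n i) → ℝ) → ∀ i, Fin (m i) → Fin (n i) → ℝ)
    (hdiff : ContDiff ℝ 1 f)
    (hgrad : ∀ X H, fderiv ℝ f X H = ∑ i, tip (g X i) (H i))
    (L0 L1 : Fin p → ℝ) (hL0 : ∀ i, 0 ≤ L0 i) (hL1 : ∀ i, 0 ≤ L1 i)
    (hsmooth : ∀ i X Y, (nn i).dual (g X i - g Y i)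
      ≤ (L0 i + L1 i * (nn i).dual (g X i)) * (nn i).N (X i - Y i))
    (finf : ℝ) (hfinf : IsGLB (Set.range f) finf)
    (X : ℕ → ∀ i, Fin (m i) → Fin (n i) → ℝ)
    (hupd : ∀ k i, IsLMOMin (nn i) (g (X k) i) (X k i)
      ((nn i).dual (g (X k) i) / (L0 i + L1 i * (nn i).dual (g (X k) i)))
      (X (k + 1) i))
    (K : ℕ) :
    ∑ k ∈ Finset.range K, ∑ i, ((nn i).dual (g (X k) i)) ^ 2
        / (2 * (L0 i + L1 i * (nn i).dual (g (X k) i)))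
      ≤ f (X 0) - finf :=
  stmt_11_general nn f g hdiff hgrad L0 L1 hsmooth finf hfinf X hupd K
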